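/- Let R be the ring of integers of a number field K, 𝔭 a nonzero prime ideal, and 𝔞, 𝔞₁, …, 𝔞ₙ fractional ideals with 𝔞ᵢ ∖ 𝔭𝔞ᵢ ⊆ 𝔞 ∖ 𝔭𝔞 for all i and (𝔞 ∖ {0}) = ⋃_{i=1}^n (𝔞ᵢ ∖ 𝔭𝔞ᵢ) ∪ (𝔭𝔞 ∖ {0}). Then 𝔞ᵢ ⊆ 𝔞 for all i, and there exists an index i with 𝔞 = 𝔞ᵢ. -/

import Mathlib

/-!
Since `𝔟ᵢ ∖ 𝔭𝔟ᵢ` is nonempty and contained in `𝔞`, and every element of `𝔟ᵢ` lies in it or is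
a difference of two of its elements, we get `𝔟ᵢ ⊆ 𝔞`, so `𝔟ᵢ = Iᵢ𝔞` for an integral ideal `Iᵢ`.
If no `Iᵢ` were the unit ideal, choose `x ∈ 𝔞` with `J𝔞 + (x) = 𝔞` for `J = 𝔭 ∏ Iᵢ`; then `x`
lies in no `M𝔞` with `J ⊆ M ≠ R`, in particular in no `𝔟ᵢ` and not in `𝔭𝔞`, contradicting the
covering hypothesis.
-/

open IsDedekindDomain FractionalIdeal
open scoped nonZeroDivisors NumberField

theorem Submodule.le_of_diff_subset {R M : Type*} [Ring R] [AddCommGroup M] [Module R M]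
    {A N B : Submodule R M} (hAN : ¬A ≤ N) (h : (A : Set M) \ N ⊆ B) : A ≤ B := by
  obtain ⟨x, hxA, hxN⟩ := SetLike.not_le_iff_exists.mp hAN
  have hxB : x ∈ B := h ⟨hxA, hxN⟩
  intro y hyA
  by_cases hyN : y ∈ N
  · have hxyB : x + y ∈ B := h ⟨add_mem hxA hyA, fun hxyN ↦ hxN (by simpa using sub_mem hxyN hyN)⟩
    simpa using sub_mem hxyB hxB
  · exact h ⟨hyA, hyN⟩

namespace FractionalIdeal

variable {R K : Type*} [CommRing R] [IsDedekindDomain R] [Field K] [Algebra R K]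
  [IsFractionRing R K]

theorem coeIdeal_mul_lt_self {I : Ideal R} (hI : I ≠ ⊤) {𝔞 : FractionalIdeal R⁰ K}
    (h𝔞 : 𝔞 ≠ 0) : (I : FractionalIdeal R⁰ K) * 𝔞 < 𝔞 := by
  refine lt_of_le_of_ne (mul_le_of_le_one_left (zero_le _) coeIdeal_le_one) fun h ↦ hI ?_
  rw [← Ideal.one_eq_top, ← coeIdeal_eq_one (K := K)]
  exact mul_right_cancel₀ h𝔞 (h.trans (one_mul 𝔞).symm)

theorem exists_coeIdeal_mul_eq_of_le {𝔞 𝔟 : FractionalIdeal R⁰ K} (h𝔞 : 𝔞 ≠ 0) (h : 𝔟 ≤ 𝔞) :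
    ∃ I : Ideal R, 𝔟 = I * 𝔞 := by
  obtain ⟨I, hI⟩ := le_one_iff_exists_coeIdeal.mp
    (by simpa [mul_inv_cancel₀ h𝔞] using mul_le_mul_left h 𝔞⁻¹ : 𝔟 * 𝔞⁻¹ ≤ 1)
  exact ⟨I, by rw [hI, mul_assoc, inv_mul_cancel₀ h𝔞, mul_one]⟩

theorem exists_mem_forall_notMem_coeIdeal_mul {𝔞 : FractionalIdeal R⁰ K} (h𝔞 : 𝔞 ≠ 0)
    {J : Ideal R} (hJ : J ≠ ⊥) :
    ∃ x ∈ 𝔞, ∀ M : Ideal R, J ≤ M → M ≠ ⊤ → x ∉ (M : FractionalIdeal R⁰ K) * 𝔞 := by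
  obtain ⟨x, hx⟩ := exists_add_spanSingleton_mul_eq (b := 1)
    (mul_le_of_le_one_left (zero_le _) coeIdeal_le_one : (J : FractionalIdeal R⁰ K) * 𝔞 ≤ 𝔞)
    (mul_ne_zero (coeIdeal_ne_zero.mpr hJ) h𝔞) one_ne_zero
  rw [mul_one] at hx
  refine ⟨x, spanSingleton_le_iff_mem.mp (hx ▸ le_add_self), fun M hJM hM hxM ↦ ?_⟩
  have hle : (J : FractionalIdeal R⁰ K) * 𝔞 + spanSingleton R⁰ x ≤ M * 𝔞 :=
    sup_le (mul_le_mul_left ((coeIdeal_le_coeIdeal K).mpr hJM) 𝔞) (spanSingleton_le_iff_mem.mpr hxM)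
  rw [hx] at hle
  exact (coeIdeal_mul_lt_self hM h𝔞).not_ge hle

end FractionalIdeal

/-- If `𝔞ᵢ ∖ 𝔭𝔞ᵢ ⊆ 𝔞 ∖ 𝔭𝔞` for all `i` and
`𝔞 ∖ {0} = ⋃ᵢ (𝔞ᵢ ∖ 𝔭𝔞ᵢ) ∪ (𝔭𝔞 ∖ {0})`, then each `𝔞ᵢ ⊆ 𝔞` and `𝔞 = 𝔞ᵢ` for some `i`. -/
theorem statement19 (K : Type*) [Field K] [NumberField K]
    (𝔭 : HeightOneSpectrum (NumberField.RingOfIntegers K))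
    (𝔞 : FractionalIdeal (nonZeroDivisors (NumberField.RingOfIntegers K)) K) (h𝔞 : 𝔞 ≠ 0)
    (n : ℕ) (𝔟 : Fin n → FractionalIdeal (nonZeroDivisors (NumberField.RingOfIntegers K)) K)
    (h𝔟 : ∀ i, 𝔟 i ≠ 0)
    (hsub : ∀ i, (𝔟 i : Set K) \ ((((𝔭.asIdeal :
        FractionalIdeal (nonZeroDivisors (NumberField.RingOfIntegers K)) K)) * 𝔟 i) : Set K)
      ⊆ (𝔞 : Set K) \ ((((𝔭.asIdeal :
        FractionalIdeal (nonZeroDivisors (NumberField.RingOfIntegers K)) K)) * 𝔞) : Set K))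
    (hcover : (𝔞 : Set K) \ {0}
      = (⋃ i, ((𝔟 i : Set K) \ ((((𝔭.asIdeal :
          FractionalIdeal (nonZeroDivisors (NumberField.RingOfIntegers K)) K)) * 𝔟 i) : Set K)))
        ∪ (((((𝔭.asIdeal :
          FractionalIdeal (nonZeroDivisors (NumberField.RingOfIntegers K)) K)) * 𝔞) : Set K)
          \ {0})) :
    (∀ i, 𝔟 i ≤ 𝔞) ∧ ∃ i, 𝔞 = 𝔟 i := by
  have hle : ∀ i, 𝔟 i ≤ 𝔞 := fun i ↦ Submodule.le_of_diff_subset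
    (coeIdeal_mul_lt_self 𝔭.isPrime.ne_top (h𝔟 i)).not_ge ((hsub i).trans Set.sdiff_subset)
  refine ⟨hle, ?_⟩
  by_contra! hne
  choose I hI using fun i ↦ exists_coeIdeal_mul_eq_of_le h𝔞 (hle i)
  have hI_ne_top : ∀ i, I i ≠ ⊤ := fun i h ↦ hne i (by rw [hI, h, coeIdeal_top, one_mul])
  have hI_ne_bot : ∀ i, I i ≠ ⊥ := fun i h ↦ h𝔟 i (by rw [hI, h, coeIdeal_bot, zero_mul])
  obtain ⟨x, hx𝔞, hx⟩ := exists_mem_forall_notMem_coeIdeal_mul (J := 𝔭.asIdeal * ∏ i, I i) h𝔞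
    (mul_ne_zero 𝔭.ne_bot (Finset.prod_ne_zero_iff.mpr fun i _ ↦ hI_ne_bot i))
  have hxP : x ∉ (𝔭.asIdeal : FractionalIdeal (𝓞 K)⁰ K) * 𝔞 :=
    hx _ Ideal.mul_le_left 𝔭.isPrime.ne_top
  have hx0 : x ∈ (𝔞 : Set K) \ {0} := ⟨hx𝔞, fun h ↦ hxP (h ▸ zero_mem _)⟩
  rw [hcover] at hx0
  obtain ⟨-, ⟨i, rfl⟩, hx𝔟, -⟩ | ⟨hxP', -⟩ := hx0
  · exact hx (I i) (Ideal.mul_le_right.trans (Ideal.le_of_dvd (Finset.dvd_prod_of_mem I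
      (Finset.mem_univ i)))) (hI_ne_top i) (hI i ▸ hx𝔟)
  · exact hxP hxP'
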